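/- arXiv:1203.4153 — 3 statements merged into one kernel-verified Lean document; each statement's English description precedes it below -/
import Mathlib

section
/- Fix b ∈ (0,1), ε with 0 < ε < min{b, 1−b}, and a finite set X ⊆ (0,∞). Let B_N be the set of portfolio states reachable from the initial state b in exactly N steps of the TRP(b,ε) dynamics. Then B_N equals the set of all values b∏_{n=1}^N u_n / ( b∏_{n=1}^N u_n + (1−b)∏_{n=1}^N v_n ) taken over sequences (u_n, v_n) ∈ X × X, n = 1, …, N, such that for every k = 1, …, N the partial state b∏_{n=1}^k u_n / ( b∏_{n=1}^k u_n + (1−b)∏_{n=1}^k v_n ) lies in (b−ε, b+ε); that is, every state reachable in N steps (possibly with rebalancings) is also the endpoint of an N-step market scenario in which the portfolio never leaves the interval (b−ε, b+ε). -/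
/-!
Without rebalancing, the state depends only on the cumulative price relatives: in odds
β / (1 − β) every step multiplies by u / v. A rebalancing resets the state to b, which is
also the endpoint of any scenario with u_n = v_n, and such a scenario never leaves the
no-trade interval. Hence both sides satisfy the same recursion in N.
-/

/-- One step of the TRP(b,ε) dynamics: from state β, upon price relatives (u,v), move to
βu/(βu+(1−β)v) if it stays in the no-trade interval, otherwise rebalance to b. -/
noncomputable def trpStep (b ε β u v : ℝ) : ℝ :=
  if β * u / (β * u + (1 - β) * v) ∈ Set.Ioo (b - ε) (b + ε) then
    β * u / (β * u + (1 - β) * v)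
  else b

/-- The set of portfolio states reachable from the initial state b in exactly N steps of
the TRP(b,ε) dynamics with price relatives taken from X. -/
noncomputable def trpReach (b ε : ℝ) (X : Set ℝ) : ℕ → Set ℝ
  | 0 => {b}
  | N + 1 => {s : ℝ | ∃ β ∈ trpReach b ε X N, ∃ u ∈ X, ∃ v ∈ X, s = trpStep b ε β u v}

namespace TRP

open Finset Function

section IccOne

variable {M : Type*} [CommMonoid M]

lemma Icc_one_succ_eq_insert (N : ℕ) : Icc 1 (N + 1) = insert (N + 1) (Icc 1 N) :=
  (insert_Icc_right_eq_Icc_succ (by simp)).symm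

lemma prod_Icc_one_update_of_le (f : ℕ → M) (x : M) {k N : ℕ} (hk : k ≤ N) :
    ∏ n ∈ Icc 1 k, update f (N + 1) x n = ∏ n ∈ Icc 1 k, f n :=
  prod_update_of_notMem (by simp; omega) f x

lemma prod_Icc_one_update_succ (f : ℕ → M) (x : M) (N : ℕ) :
    ∏ n ∈ Icc 1 (N + 1), update f (N + 1) x n = (∏ n ∈ Icc 1 N, f n) * x := by
  rw [prod_Icc_succ_top (by omega), prod_Icc_one_update_of_le f x le_rfl, update_self]

lemma update_mem_of_forall_Icc_one {α : Type*} {S : Set α} {f : ℕ → α} {x : α} {N : ℕ}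
    (hf : ∀ n ∈ Icc 1 N, f n ∈ S) (hx : x ∈ S) :
    ∀ n ∈ Icc 1 (N + 1), update f (N + 1) x n ∈ S := by
  rw [Icc_one_succ_eq_insert, forall_mem_insert, update_self]
  exact ⟨hx, fun n hn => by
    rw [update_of_ne (by simp at hn; omega)]
    exact hf n hn⟩

end IccOne

noncomputable def wealthShare (β u v : ℝ) : ℝ :=
  β * u / (β * u + (1 - β) * v)

lemma wealthShare_wealthShare {b P Q : ℝ} (u v : ℝ) (h : b * P + (1 - b) * Q ≠ 0) :
    wealthShare (wealthShare b P Q) u v = wealthShare b (P * u) (Q * v) := by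
  have hcompl : 1 - b * P / (b * P + (1 - b) * Q) = (1 - b) * Q / (b * P + (1 - b) * Q) := by
    field_simp
    ring
  unfold wealthShare
  rw [hcompl, div_mul_eq_mul_div, div_mul_eq_mul_div, ← add_div,
    div_div_div_cancel_right₀ h]
  ring_nf

lemma wealthShare_self (b : ℝ) {u : ℝ} (hu : u ≠ 0) : wealthShare b u u = b := by
  rw [wealthShare, ← add_mul, add_sub_cancel, one_mul, mul_div_cancel_right₀ b hu]

lemma trpStep_of_mem {b ε β u v : ℝ} (h : wealthShare β u v ∈ Set.Ioo (b - ε) (b + ε)) :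
    trpStep b ε β u v = wealthShare β u v :=
  if_pos h

lemma trpStep_of_notMem {b ε β u v : ℝ} (h : wealthShare β u v ∉ Set.Ioo (b - ε) (b + ε)) :
    trpStep b ε β u v = b :=
  if_neg h

noncomputable def noRebalanceReach (b ε : ℝ) (X : Set ℝ) (N : ℕ) : Set ℝ :=
  {s | ∃ u v : ℕ → ℝ, (∀ n ∈ Icc 1 N, u n ∈ X) ∧ (∀ n ∈ Icc 1 N, v n ∈ X) ∧
    (∀ k ∈ Icc 1 N, wealthShare b (∏ n ∈ Icc 1 k, u n) (∏ n ∈ Icc 1 k, v n) ∈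
      Set.Ioo (b - ε) (b + ε)) ∧
    s = wealthShare b (∏ n ∈ Icc 1 N, u n) (∏ n ∈ Icc 1 N, v n)}

variable {b ε : ℝ} {X : Set ℝ}

lemma noRebalanceReach_zero : noRebalanceReach b ε X 0 = {b} := by
  ext s
  simp [noRebalanceReach, wealthShare_self]

lemma self_mem_noRebalanceReach (hε : 0 < ε) {x : ℝ} (hx : x ∈ X) (hx0 : x ≠ 0) (N : ℕ) :
    b ∈ noRebalanceReach b ε X N := by
  have hconst : ∀ k, wealthShare b (∏ _n ∈ Icc 1 k, x) (∏ _n ∈ Icc 1 k, x) = b := fun k =>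
    wealthShare_self b (prod_ne_zero_iff.2 fun _ _ => hx0)
  refine ⟨fun _ => x, fun _ => x, fun _ _ => hx, fun _ _ => hx, fun k _ => ?_, (hconst N).symm⟩
  rw [hconst k]
  constructor <;> linarith

lemma noRebalanceReach_succ (hb : b ∈ Set.Ioo 0 1) (hXpos : X ⊆ Set.Ioi 0) (N : ℕ) :
    noRebalanceReach b ε X (N + 1) = {s | ∃ β ∈ noRebalanceReach b ε X N, ∃ u ∈ X, ∃ v ∈ X,
      s ∈ Set.Ioo (b - ε) (b + ε) ∧ s = wealthShare β u v} := by
  have hden : ∀ {U V : ℕ → ℝ}, (∀ n ∈ Icc 1 N, U n ∈ X) → (∀ n ∈ Icc 1 N, V n ∈ X) →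
      b * ∏ n ∈ Icc 1 N, U n + (1 - b) * ∏ n ∈ Icc 1 N, V n ≠ 0 := fun {U V} hU hV => by
    have hPU : 0 < ∏ n ∈ Icc 1 N, U n := prod_pos fun n hn => hXpos (hU n hn)
    have hPV : 0 < ∏ n ∈ Icc 1 N, V n := prod_pos fun n hn => hXpos (hV n hn)
    have hb0 : 0 < b := hb.1
    have hb1 : 0 < 1 - b := sub_pos.2 hb.2
    positivity
  ext s
  constructor
  · rintro ⟨U, V, hU, hV, hk, rfl⟩
    rw [Icc_one_succ_eq_insert, forall_mem_insert] at hU hV hk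
    refine ⟨_, ⟨U, V, hU.2, hV.2, hk.2, rfl⟩, U (N + 1), hU.1, V (N + 1), hV.1, hk.1, ?_⟩
    rw [wealthShare_wealthShare _ _ (hden hU.2 hV.2), prod_Icc_succ_top (by omega),
      prod_Icc_succ_top (by omega)]
  · rintro ⟨β, ⟨U, V, hU, hV, hk, rfl⟩, u, hu, v, hv, hs, rfl⟩
    have hlast : wealthShare b (∏ n ∈ Icc 1 (N + 1), update U (N + 1) u n)
        (∏ n ∈ Icc 1 (N + 1), update V (N + 1) v n) =
        wealthShare (wealthShare b (∏ n ∈ Icc 1 N, U n) (∏ n ∈ Icc 1 N, V n)) u v := by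
      rw [prod_Icc_one_update_succ, prod_Icc_one_update_succ,
        wealthShare_wealthShare _ _ (hden hU hV)]
    refine ⟨update U (N + 1) u, update V (N + 1) v, update_mem_of_forall_Icc_one hU hu,
      update_mem_of_forall_Icc_one hV hv, ?_, hlast.symm⟩
    rw [Icc_one_succ_eq_insert, forall_mem_insert, hlast]
    refine ⟨hs, fun k hk' => ?_⟩
    have hkN : k ≤ N := (mem_Icc.1 hk').2
    rw [prod_Icc_one_update_of_le U u hkN, prod_Icc_one_update_of_le V v hkN]
    exact hk k hk'

end TRP

open TRP in
theorem stmt_6_general (b ε : ℝ) (hb : b ∈ Set.Ioo (0 : ℝ) 1)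
    (hε : 0 < ε)
    (X : Set ℝ) (hXpos : X ⊆ Set.Ioi (0 : ℝ)) (N : ℕ) :
    trpReach b ε X N =
      {s : ℝ | ∃ u v : ℕ → ℝ, (∀ n ∈ Finset.Icc 1 N, u n ∈ X) ∧ (∀ n ∈ Finset.Icc 1 N, v n ∈ X) ∧
        (∀ k ∈ Finset.Icc 1 N,
          b * (∏ n ∈ Finset.Icc 1 k, u n) /
            (b * (∏ n ∈ Finset.Icc 1 k, u n) + (1 - b) * (∏ n ∈ Finset.Icc 1 k, v n)) ∈
            Set.Ioo (b - ε) (b + ε)) ∧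
        s = b * (∏ n ∈ Finset.Icc 1 N, u n) /
          (b * (∏ n ∈ Finset.Icc 1 N, u n) + (1 - b) * (∏ n ∈ Finset.Icc 1 N, v n))} := by
  change trpReach b ε X N = noRebalanceReach b ε X N
  induction N with
  | zero => exact noRebalanceReach_zero.symm
  | succ N ih =>
    rw [noRebalanceReach_succ hb hXpos]
    ext s
    constructor
    · rintro ⟨β, hβ, u, hu, v, hv, rfl⟩
      by_cases h : wealthShare β u v ∈ Set.Ioo (b - ε) (b + ε)
      · rw [trpStep_of_mem h]
        exact ⟨β, ih ▸ hβ, u, hu, v, hv, h, rfl⟩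
      · rw [trpStep_of_notMem h, ← noRebalanceReach_succ hb hXpos]
        exact self_mem_noRebalanceReach hε hu (hXpos hu).ne' _
    · rintro ⟨β, hβ, u, hu, v, hv, hs, rfl⟩
      exact ⟨β, ih ▸ hβ, u, hu, v, hv, (trpStep_of_mem hs).symm⟩

/-- Every state reachable in N steps of the TRP(b,ε) dynamics (possibly with rebalancings)
is the endpoint of an N-step market scenario in which the portfolio never leaves the
no-trade interval, and conversely. -/
theorem stmt_6 (b ε : ℝ) (hb : b ∈ Set.Ioo (0 : ℝ) 1)
    (hε : 0 < ε) (hε' : ε < min b (1 - b))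
    (X : Set ℝ) (hXfin : X.Finite) (hXpos : X ⊆ Set.Ioi (0 : ℝ)) (N : ℕ) :
    trpReach b ε X N =
      {s : ℝ | ∃ u v : ℕ → ℝ, (∀ n ∈ Finset.Icc 1 N, u n ∈ X) ∧ (∀ n ∈ Finset.Icc 1 N, v n ∈ X) ∧
        (∀ k ∈ Finset.Icc 1 N,
          b * (∏ n ∈ Finset.Icc 1 k, u n) /
            (b * (∏ n ∈ Finset.Icc 1 k, u n) + (1 - b) * (∏ n ∈ Finset.Icc 1 k, v n)) ∈
            Set.Ioo (b - ε) (b + ε)) ∧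
        s = b * (∏ n ∈ Finset.Icc 1 N, u n) /
          (b * (∏ n ∈ Finset.Icc 1 N, u n) + (1 - b) * (∏ n ∈ Finset.Icc 1 N, v n))} :=
  stmt_6_general b ε hb hε X hXpos N
end

section
/- Fix b ∈ (0,1), ε with 0 < ε < min{b, 1−b}, and a finite set X ⊆ (0,∞) with |X| = K. Let B_N be the set of portfolio states reachable from the initial state b in exactly N steps of the TRP(b,ε) dynamics. Then |B_N| ≤ C(N + K² − K, N), where C denotes the binomial coefficient. -/
-- The state reached from `b` without rebalancing, once the first asset's value has grown by the
-- factor `p` relative to the second's.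
noncomputable def trpState (b p : ℝ) : ℝ := b * p / (b * p + (1 - b))

@[simp]
lemma trpState_one (b : ℝ) : trpState b 1 = b := by
  simp [trpState]

lemma trpState_update {b p u v : ℝ} (hb : b ∈ Set.Ioo (0 : ℝ) 1) (hp : 0 < p)
    (hu : 0 < u) (hv : 0 < v) :
    trpState b p * u / (trpState b p * u + (1 - trpState b p) * v) = trpState b (p * (u / v)) := by
  obtain ⟨hb0, hb1⟩ := hb
  have hb1' : 0 < 1 - b := sub_pos.2 hb1
  have hden : 0 < b * p + (1 - b) := by positivity
  have hmix : trpState b p * u + (1 - trpState b p) * v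
      = (b * p * u + (1 - b) * v) / (b * p + (1 - b)) := by
    unfold trpState; field_simp; ring
  rw [hmix]
  unfold trpState
  field_simp

noncomputable def ratioFinset (X : Finset ℝ) : Finset ℝ :=
  insert 1 (X.offDiag.image fun q => q.1 / q.2)

lemma div_mem_ratioFinset {X : Finset ℝ} {u v : ℝ} (hu : u ∈ X) (hv : v ∈ X) (hv0 : v ≠ 0) :
    u / v ∈ ratioFinset X := by
  by_cases huv : u = v
  · simp [ratioFinset, huv, hv0]
  · exact Finset.mem_insert_of_mem
      (Finset.mem_image.2 ⟨(u, v), Finset.mem_offDiag.2 ⟨hu, hv, huv⟩, rfl⟩)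

lemma pos_of_mem_ratioFinset {X : Finset ℝ} (hX : ∀ x ∈ X, 0 < x) {r : ℝ}
    (hr : r ∈ ratioFinset X) : 0 < r := by
  rcases Finset.mem_insert.1 hr with rfl | hr
  · exact one_pos
  · obtain ⟨⟨u, v⟩, huv, rfl⟩ := Finset.mem_image.1 hr
    obtain ⟨hu, hv, -⟩ := Finset.mem_offDiag.1 huv
    exact div_pos (hX u hu) (hX v hv)

lemma card_ratioFinset_le (X : Finset ℝ) :
    (ratioFinset X).card ≤ X.card ^ 2 - X.card + 1 := by
  calc (ratioFinset X).card ≤ (X.offDiag.image fun q => q.1 / q.2).card + 1 :=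
        Finset.card_insert_le _ _
    _ ≤ X.offDiag.card + 1 := by gcongr; exact Finset.card_image_le
    _ = X.card ^ 2 - X.card + 1 := by rw [Finset.offDiag_card, sq]

section Reach

variable {b ε : ℝ} {X : Set ℝ} {S : Finset ℝ}

noncomputable def symProd {N : ℕ} (s : Sym S N) : ℝ := ((s : Multiset S).map (↑)).prod

@[simp]
lemma symProd_nil : symProd (Sym.nil : Sym S 0) = 1 := rfl

@[simp]
lemma symProd_cons {N : ℕ} (a : S) (s : Sym S N) : symProd (a ::ₛ s) = a * symProd s := by
  rw [symProd, Sym.coe_cons, Multiset.map_cons, Multiset.prod_cons, symProd]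

@[simp]
lemma symProd_replicate (N : ℕ) (a : S) : symProd (Sym.replicate N a) = (a : ℝ) ^ N := by
  simp [symProd, Sym.coe_replicate]

-- Rebalancing resets the wealth ratio to `1 = 1 ^ (N + 1)`, while a trade-free step multiplies
-- it by `u / v`; either way the ratio stays a product of exactly `N` elements of `S`.
lemma exists_sym_of_mem_trpReach (hb : b ∈ Set.Ioo (0 : ℝ) 1) (hX : X ⊆ Set.Ioi 0)
    (hS_pos : ∀ r ∈ S, 0 < r) (hS_one : 1 ∈ S) (hS_div : ∀ u ∈ X, ∀ v ∈ X, u / v ∈ S) :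
    ∀ {N : ℕ}, ∀ β ∈ trpReach b ε X N, ∃ s : Sym S N, β = trpState b (symProd s)
  | 0, β, hβ => ⟨Sym.nil, by rwa [symProd_nil, trpState_one, ← Set.mem_singleton_iff]⟩
  | N + 1, _, ⟨β, hβ, u, hu, v, hv, rfl⟩ => by
    obtain ⟨s, rfl⟩ := exists_sym_of_mem_trpReach hb hX hS_pos hS_one hS_div β hβ
    have hp : 0 < symProd s := Multiset.prod_pos fun r hr => by
      obtain ⟨r, -, rfl⟩ := Multiset.mem_map.1 hr
      exact hS_pos r r.2
    unfold trpStep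
    split_ifs
    · refine ⟨⟨u / v, hS_div u hu v hv⟩ ::ₛ s, ?_⟩
      rw [trpState_update hb hp (hX hu) (hX hv), symProd_cons, mul_comm]
    · exact ⟨Sym.replicate (N + 1) ⟨1, hS_one⟩, by simp⟩

lemma ncard_trpReach_le (hb : b ∈ Set.Ioo (0 : ℝ) 1) (hX : X ⊆ Set.Ioi 0)
    (hS_pos : ∀ r ∈ S, 0 < r) (hS_one : 1 ∈ S) (hS_div : ∀ u ∈ X, ∀ v ∈ X, u / v ∈ S)
    (N : ℕ) : (trpReach b ε X N).ncard ≤ (S.card + N - 1).choose N := by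
  classical
  set states := Finset.univ.image fun s : Sym S N => trpState b (symProd s)
  have hsub : trpReach b ε X N ⊆ states := fun β hβ => by
    obtain ⟨s, rfl⟩ := exists_sym_of_mem_trpReach hb hX hS_pos hS_one hS_div β hβ
    exact Finset.mem_coe.2 (Finset.mem_image_of_mem _ (Finset.mem_univ s))
  calc (trpReach b ε X N).ncard ≤ states.card := by
        simpa using Set.ncard_le_ncard hsub states.finite_toSet
    _ ≤ Fintype.card (Sym S N) := Finset.card_image_le
    _ = (S.card + N - 1).choose N := by rw [Sym.card_sym_eq_choose, Fintype.card_coe]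

end Reach

theorem stmt_7_general (b ε : ℝ) (hb : b ∈ Set.Ioo (0 : ℝ) 1)
    (X : Set ℝ) (hXfin : X.Finite) (hXpos : X ⊆ Set.Ioi (0 : ℝ))
    (K : ℕ) (hK : X.ncard = K) (N : ℕ) :
    (trpReach b ε X N).ncard ≤ (N + K ^ 2 - K).choose N := by
  set S := ratioFinset hXfin.toFinset
  have hS_card : S.card ≤ K ^ 2 - K + 1 := by
    simpa [← Set.ncard_eq_toFinset_card X hXfin, hK] using card_ratioFinset_le hXfin.toFinset
  have hS_bound := ncard_trpReach_le (ε := ε) (S := S) hb hXpos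
    (fun r => pos_of_mem_ratioFinset fun x hx => hXpos (hXfin.mem_toFinset.1 hx))
    (Finset.mem_insert_self _ _)
    (fun u hu v hv => div_mem_ratioFinset (hXfin.mem_toFinset.2 hu) (hXfin.mem_toFinset.2 hv)
      (hXpos hv).ne') N
  refine hS_bound.trans (Nat.choose_le_choose N ?_)
  have hK_sq : K ≤ K ^ 2 := Nat.le_self_pow two_ne_zero K
  omega

/-- The number of portfolio states reachable in N steps of the TRP(b,ε) dynamics over a
K-element set of price relatives is at most C(N + K² − K, N). -/
theorem stmt_7 (b ε : ℝ) (hb : b ∈ Set.Ioo (0 : ℝ) 1)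
    (hε : 0 < ε) (hε' : ε < min b (1 - b))
    (X : Set ℝ) (hXfin : X.Finite) (hXpos : X ⊆ Set.Ioi (0 : ℝ))
    (K : ℕ) (hK : X.ncard = K) (N : ℕ) :
    (trpReach b ε X N).ncard ≤ (N + K ^ 2 - K).choose N :=
  stmt_7_general b ε hb X hXfin hXpos K hK N
end

section
/- Let α₂ < 0 < α₁ be reals, let Z ⊆ ℝ be a finite set that contains 0 and is closed under negation, let Z⁺ = { z ∈ Z : z ≥ 0 }, and let M be the set of all integer linear combinations of elements of Z⁺ (equivalently, the additive subgroup of ℝ generated by Z). Assume |z| < min{|α₁|, |α₂|} for every z ∈ Z⁺. Then for every m ∈ M ∩ (α₂, α₁) there exist N ≥ 1 and elements Z⁽¹⁾, …, Z⁽ᴺ⁾ ∈ Z such that m = ∑_{n=1}^N Z⁽ⁿ⁾ and ∑_{n=1}^k Z⁽ⁿ⁾ ∈ (α₂, α₁) for every k = 1, …, N. -/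
/-!
Write `m` as a sum of summands `±z` with `z ∈ Z⁺`; each summand `y` satisfies `-y ∈ (α₂, α₁)`.
Reorder the summands from the back: as long as the list is nonempty, move to the end a summand `y`
of the same sign as the current total `s`. Then `s - y` lies between `-y` and `s`, both in the
interval, so the remaining total stays in the interval and we recurse. Prepending a `0` makes the
resulting sequence nonempty.
-/

lemma forall_sum_take_append_singleton_mem {α : Type*} [AddMonoid α] {I : Set α} {l : List α}
    {y : α} (hl : ∀ k, (l.take k).sum ∈ I) (hy : (l ++ [y]).sum ∈ I) (k : ℕ) :
    ((l ++ [y]).take k).sum ∈ I := by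
  rcases le_or_gt k l.length with hk | hk
  · simpa [List.take_append, Nat.sub_eq_zero_of_le hk] using hl k
  · rwa [List.take_of_length_le (by simpa using hk)]

lemma sum_Icc_getD_eq_sum_take {α : Type*} [AddCommMonoid α] (l : List α) (k : ℕ) :
    ∑ n ∈ Finset.Icc 1 k, l.getD (n - 1) 0 = (l.take k).sum := by
  induction k with
  | zero => simp
  | succ k ih =>
    rw [Finset.sum_Icc_succ_top (Nat.le_add_left 1 k), ih, Nat.add_sub_cancel]
    rcases lt_or_ge k l.length with hk | hk
    · rw [List.sum_take_succ l k hk, List.getD_eq_getElem _ _ hk]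
    · rw [List.take_of_length_le hk, List.take_of_length_le (by omega),
        List.getD_eq_default _ _ hk, add_zero]

lemma exists_list_of_mem_addSubgroup_closure {G : Type*} [AddGroup G] {s : Set G} {x : G}
    (hx : x ∈ AddSubgroup.closure s) : ∃ l : List G, (∀ y ∈ l, y ∈ s ∨ -y ∈ s) ∧ l.sum = x := by
  have hx' : x ∈ (AddSubgroup.closure s).toAddSubmonoid := hx
  rw [AddSubgroup.closure_toAddSubmonoid] at hx'
  obtain ⟨l, hl, rfl⟩ := AddSubmonoid.exists_list_of_mem_closure hx'
  exact ⟨l, fun y hy => hl y hy, rfl⟩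

section OrderedGroup

variable {α : Type*} [AddCommGroup α] [LinearOrder α] [IsOrderedAddMonoid α]

lemma exists_mem_sum_sub_mem_uIcc {l : List α} (hl : l ≠ []) :
    ∃ y ∈ l, l.sum - y ∈ Set.uIcc (-y) l.sum := by
  rcases le_total 0 l.sum with hs | hs
  · obtain ⟨y, hy, hy0⟩ := List.exists_le_of_sum_le hl (fun _ => 0) id (by simpa using hs)
    refine ⟨y, hy, Set.mem_uIcc.2 (Or.inl ⟨?_, ?_⟩)⟩
    · simpa [sub_eq_add_neg, add_comm] using hs
    · simpa using hy0
  · obtain ⟨y, hy, hy0⟩ := List.exists_le_of_sum_le hl id (fun _ => 0) (by simpa using hs)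
    refine ⟨y, hy, Set.mem_uIcc.2 (Or.inr ⟨?_, ?_⟩)⟩
    · simpa using hy0
    · simpa [sub_eq_add_neg, add_comm] using hs

theorem exists_perm_forall_sum_take_mem {I : Set α} (hI : I.OrdConnected) (h0 : (0 : α) ∈ I)
    (l : List α) (hl : ∀ y ∈ l, -y ∈ I) (hs : l.sum ∈ I) :
    ∃ l' : List α, l'.Perm l ∧ ∀ k, (l'.take k).sum ∈ I := by
  rcases eq_or_ne l [] with rfl | hne
  · exact ⟨[], List.Perm.refl _, fun _ => by simpa using h0⟩
  obtain ⟨y, hy, hmem⟩ := exists_mem_sum_sub_mem_uIcc hne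
  classical
  have hsum : (l.erase y).sum + y = l.sum := by rw [add_comm, List.sum_erase hy]
  have hs' : (l.erase y).sum ∈ I := by
    refine hI.uIcc_subset (hl y hy) hs ?_
    rwa [← hsum, add_sub_cancel_right, hsum] at hmem
  obtain ⟨l', hperm, hl'⟩ := exists_perm_forall_sum_take_mem hI h0 (l.erase y)
    (fun z hz => hl z (List.mem_of_mem_erase hz)) hs'
  refine ⟨l' ++ [y], ?_, forall_sum_take_append_singleton_mem hl' ?_⟩
  · exact (List.perm_append_singleton y l').trans
      ((hperm.cons y).trans (List.perm_cons_erase hy).symm)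
  · rwa [List.sum_append, List.sum_singleton, hperm.sum_eq, hsum]
termination_by l.length
decreasing_by rw [List.length_erase_of_mem hy]; exact Nat.pred_lt (List.length_pos_of_mem hy).ne'

end OrderedGroup

lemma mem_Ioo_of_abs_lt_min_abs {a b z : ℝ} (ha : a < 0) (hb : 0 < b)
    (hz : |z| < min |b| |a|) : z ∈ Set.Ioo a b := by
  rw [abs_of_pos hb, abs_of_neg ha, lt_min_iff, abs_lt, abs_lt] at hz
  exact ⟨by linarith, by linarith⟩

/-- Every element of the subgroup generated by the nonnegative log-ratios that lies in the
no-trade band (α₂, α₁) is achievable as a sum of elements of Z all of whose partial sums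
stay in (α₂, α₁). -/
theorem stmt_8 (α₁ α₂ : ℝ) (hα₂ : α₂ < 0) (hα₁ : 0 < α₁)
    (Z : Finset ℝ) (h0 : (0 : ℝ) ∈ Z) (hneg : ∀ z ∈ Z, -z ∈ Z)
    (hsmall : ∀ z ∈ Z, 0 ≤ z → |z| < min |α₁| |α₂|)
    (M : AddSubgroup ℝ) (hM : M = AddSubgroup.closure {z : ℝ | z ∈ Z ∧ 0 ≤ z}) :
    ∀ m ∈ M, m ∈ Set.Ioo α₂ α₁ →
      ∃ N : ℕ, 1 ≤ N ∧ ∃ f : ℕ → ℝ,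
        (∀ n ∈ Finset.Icc 1 N, f n ∈ Z) ∧
        m = ∑ n ∈ Finset.Icc 1 N, f n ∧
        ∀ k ∈ Finset.Icc 1 N, (∑ n ∈ Finset.Icc 1 k, f n) ∈ Set.Ioo α₂ α₁ := by
  intro m hm hmI
  subst hM
  obtain ⟨l, hlZ, rfl⟩ := exists_list_of_mem_addSubgroup_closure hm
  have hl : ∀ y ∈ 0 :: l, y ∈ Z ∧ -y ∈ Set.Ioo α₂ α₁ := by
    simp only [List.mem_cons, forall_eq_or_imp, neg_zero]
    refine ⟨⟨h0, hα₂, hα₁⟩, fun y hy => ?_⟩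
    rcases hlZ y hy with ⟨hyZ, hy0⟩ | ⟨hyZ, hy0⟩
    · exact ⟨hyZ, mem_Ioo_of_abs_lt_min_abs hα₂ hα₁ (by rw [abs_neg]; exact hsmall y hyZ hy0)⟩
    · exact ⟨neg_neg y ▸ hneg _ hyZ, mem_Ioo_of_abs_lt_min_abs hα₂ hα₁ (hsmall _ hyZ hy0)⟩
  obtain ⟨l', hperm, hpartial⟩ := exists_perm_forall_sum_take_mem Set.ordConnected_Ioo
    ⟨hα₂, hα₁⟩ (0 :: l) (fun y hy => (hl y hy).2) (by simpa using hmI)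
  refine ⟨l'.length, by simp [hperm.length_eq], fun n => l'.getD (n - 1) 0, ?_, ?_, ?_⟩
  · intro n hn
    rw [Finset.mem_Icc] at hn
    have hmem : l'.getD (n - 1) 0 ∈ l' := by
      rw [List.getD_eq_getElem l' 0 (by omega)]
      exact List.getElem_mem _
    exact (hl _ (hperm.subset hmem)).1
  · rw [sum_Icc_getD_eq_sum_take, List.take_length, hperm.sum_eq, List.sum_cons, zero_add]
  · exact fun k _ => sum_Icc_getD_eq_sum_take l' k ▸ hpartial k
end
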